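/- Let V₁ ⊆ V₂ ⊆ ⋯ be a nested exhausting sequence of finite-dimensional subspaces of ℝ^∞. Then L(ℝ^∞, ℝ^∞) is the inverse limit, in the category of topological spaces, of the tower of restriction maps ⋯ → L(V₂, ℝ^∞) → L(V₁, ℝ^∞). -/

import Mathlib

open scoped RealInnerProductSpace
noncomputable section

/-- `ℝ^∞`: the space of eventually-zero sequences of real numbers. -/
abbrev Rinf : Type := ℕ →₀ ℝ

/-- The inclusion `ℝ^n → ℝ^∞`. -/
def inclR (n : ℕ) : EuclideanSpace ℝ (Fin n) →ₗ[ℝ] Rinf where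
  toFun x := Finsupp.onFinset (Finset.range n)
    (fun m => if h : m < n then x ⟨m, h⟩ else 0)
    (fun m hm => by
      rw [Finset.mem_range]
      by_contra h
      simp [h] at hm)
  map_add' x y := Finsupp.ext fun m => by
    by_cases h : m < n <;> simp [Finsupp.onFinset_apply, h]
  map_smul' c x := Finsupp.ext fun m => by
    by_cases h : m < n <;> simp [Finsupp.onFinset_apply, h]

/-- The weak (colimit) topology on `ℝ^∞` with respect to the subspaces `ℝ^n`. -/
instance : TopologicalSpace Rinf :=
  ⨆ n, TopologicalSpace.coinduced (inclR n) inferInstance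

/-- The inner product on `ℝ^∞`. -/
def rinner (x y : Rinf) : ℝ := ∑' n, x n * y n

/-- A self-map of `ℝ^∞` is a linear isometric embedding if it is additive,
homogeneous and preserves the inner product. -/
def LinIso (f : Rinf → Rinf) : Prop :=
  (∀ a b, f (a + b) = f a + f b) ∧ (∀ (c : ℝ) (a : Rinf), f (c • a) = c • f a) ∧
    ∀ a b, rinner (f a) (f b) = rinner a b

/-- The monoid `L = L(ℝ^∞, ℝ^∞)` of (continuous) linear isometric self-embeddings of `ℝ^∞`,
topologized as a subspace of the compact-open mapping space. -/
abbrev LMon : Type := {f : C(Rinf, Rinf) // LinIso f}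


/-- The space `L(p, ℝ^∞)` of (continuous) linear isometric embeddings of a subspace
`p ⊆ ℝ^∞` into `ℝ^∞`, with the subspace topology from the compact-open topology; here `p`
carries the subspace topology and the restricted inner product. -/
abbrev LIEsub (p : Submodule ℝ Rinf) : Type :=
  {f : C(p, Rinf) // (∀ a b : p, f (a + b) = f a + f b) ∧
    (∀ (c : ℝ) (a : p), f (c • a) = c • f a) ∧
    ∀ a b : p, rinner (f a) (f b) = rinner (a : Rinf) (b : Rinf)}

/-- Restriction `L(q, ℝ^∞) → L(p, ℝ^∞)` along an inclusion `p ≤ q` of subspaces of `ℝ^∞`. -/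
def resSub {p q : Submodule ℝ Rinf} (h : p ≤ q) (f : LIEsub q) : LIEsub p :=
  ⟨f.1.comp ⟨fun a => ⟨a.1, h a.2⟩, (continuous_subtype_val.subtype_mk _)⟩,
    fun a b => by
      simpa using f.2.1 ⟨a.1, h a.2⟩ ⟨b.1, h b.2⟩,
    fun c a => by
      simpa using f.2.2.1 c ⟨a.1, h a.2⟩,
    fun a b => f.2.2.2 ⟨a.1, h a.2⟩ ⟨b.1, h b.2⟩⟩

/-- Restriction `L(ℝ^∞, ℝ^∞) → L(p, ℝ^∞)` of a linear isometric self-embedding of `ℝ^∞`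
to a subspace `p ⊆ ℝ^∞`. -/
def resFull (p : Submodule ℝ Rinf) (f : LMon) : LIEsub p :=
  ⟨f.1.comp ⟨Subtype.val, continuous_subtype_val⟩,
    fun a b => by
      simp only [ContinuousMap.comp_apply, ContinuousMap.coe_mk, Submodule.coe_add]
      exact f.2.1 _ _,
    fun c a => by
      simp only [ContinuousMap.comp_apply, ContinuousMap.coe_mk, Submodule.coe_smul]
      exact f.2.2.1 _ _,
    fun a b => f.2.2.2 _ _⟩

section Aux

open Set

lemma continuous_inclR (n : ℕ) : Continuous (inclR n) :=
  continuous_iff_coinduced_le.2 <|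
    le_iSup (fun n => TopologicalSpace.coinduced (inclR n) inferInstance) n

lemma continuous_from_Rinf {Y : Type*} [TopologicalSpace Y] {f : Rinf → Y}
    (h : ∀ n, Continuous (f ∘ inclR n)) : Continuous f := by
  rw [show (instTopologicalSpaceRinf : TopologicalSpace Rinf) =
    ⨆ n, TopologicalSpace.coinduced (inclR n) inferInstance from rfl, continuous_iSup_dom]
  intro n
  rw [continuous_coinduced_dom]
  exact h n

lemma isClosed_Rinf_iff {s : Set Rinf} :
    IsClosed s ↔ ∀ n, IsClosed ((inclR n) ⁻¹' s) := by
  rw [show (instTopologicalSpaceRinf : TopologicalSpace Rinf) =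
    ⨆ n, TopologicalSpace.coinduced (inclR n) inferInstance from rfl, isClosed_iSup_iff]
  exact forall_congr' fun n => isClosed_coinduced

lemma inclR_apply (n : ℕ) (v : EuclideanSpace ℝ (Fin n)) (m : ℕ) :
    inclR n v m = if h : m < n then v ⟨m, h⟩ else 0 := rfl

lemma inclR_injective (n : ℕ) : Function.Injective (inclR n) := by
  intro a b hab
  ext i
  have := congrArg (fun x : Rinf => x (i : ℕ)) hab
  simpa [inclR_apply, i.2] using this

lemma inclR_eq_zero_of_ge (n : ℕ) (v : EuclideanSpace ℝ (Fin n)) {k : ℕ} (hk : n ≤ k) :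
    inclR n v k = 0 := by
  rw [inclR_apply]
  simp [Nat.not_lt.2 hk]

/-- Every "finitely supported below `n`" vector lies in some stage. -/
lemma stage_absorbs (V : ℕ → Submodule ℝ Rinf) (hmono : ∀ n, V n ≤ V (n + 1))
    (hexh : ∀ x : Rinf, ∃ n, x ∈ V n) (n : ℕ) :
    ∃ M, ∀ x : Rinf, (∀ k, n ≤ k → x k = 0) → x ∈ V M := by
  classical
  have Vmono : Monotone V := monotone_nat_of_le_succ hmono
  choose c hc using fun i : ℕ => hexh (Finsupp.single i 1)
  refine ⟨(Finset.range n).sup c, fun x hx => ?_⟩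
  have hsupp : x.support ⊆ Finset.range n := by
    intro i hi
    rw [Finset.mem_range]
    by_contra h
    exact (Finsupp.mem_support_iff.1 hi) (hx i (Nat.le_of_not_lt h))
  have hxsum : x = ∑ i ∈ Finset.range n, Finsupp.single i (x i) := by
    conv_lhs => rw [← Finsupp.sum_single x]
    exact Finsupp.sum_of_support_subset x hsupp _ (fun i _ => Finsupp.single_zero i)
  rw [hxsum]
  refine Submodule.sum_mem _ fun i hi => ?_
  have : Finsupp.single i (x i) = x i • Finsupp.single i (1 : ℝ) := by
    rw [Finsupp.smul_single, smul_eq_mul, mul_one]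
  rw [this]
  exact Submodule.smul_mem _ _ (Vmono (Finset.le_sup hi) (hc i))

/-- Every compact subset of `ℝ^∞` has uniformly bounded support. -/
lemma compact_subset_bounded {K : Set Rinf} (hK : IsCompact K) :
    ∃ n, ∀ x ∈ K, ∀ k, n ≤ k → x k = 0 := by
  classical
  by_contra hcon
  push_neg at hcon
  choose x hxK k hk hxk using hcon
  set A : Set Rinf := Set.range x with hA
  -- every subset of A is closed
  have hBclosed : ∀ B ⊆ A, IsClosed B := by
    intro B hB
    rw [isClosed_Rinf_iff]
    intro n
    have hfin : ((inclR n) ⁻¹' B).Finite := by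
      have hsub : (inclR n) ⁻¹' B ⊆ ⋃ j ∈ Finset.range n, (inclR n) ⁻¹' {x j} := by
        intro v hv
        obtain ⟨j, hj⟩ := hB hv
        have hjn : j < n := by
          by_contra h
          have h1 : x j (k j) = 0 := by
            rw [hj]
            exact inclR_eq_zero_of_ge n v (le_trans (Nat.le_of_not_lt h) (hk j))
          exact hxk j h1
        simp only [Set.mem_iUnion, Finset.mem_range]
        exact ⟨j, hjn, by simp [hj]⟩
      refine Set.Finite.subset ?_ hsub
      refine Set.Finite.biUnion (Finset.range n).finite_toSet fun j _ => ?_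
      exact (Set.subsingleton_singleton.preimage (inclR_injective n)).finite
    exact hfin.isClosed
  -- A is infinite
  have hAinf : A.Infinite := by
    intro hAfin
    have : (Set.univ : Set ℕ).Finite := by
      have : (Set.univ : Set ℕ) ⊆ ⋃ a ∈ A, {n | x n = a} := by
        intro n _
        simp only [Set.mem_iUnion]
        exact ⟨x n, ⟨n, rfl⟩, rfl⟩
      refine Set.Finite.subset (Set.Finite.biUnion hAfin fun a ha => ?_) this
      by_contra hfib
      have hfib' : {n | x n = a}.Infinite := hfib
      obtain ⟨n, hn, hna⟩ := hfib'.exists_gt (a.support.sup id)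
      have h1 : x n (k n) ≠ 0 := hxk n
      rw [hn] at h1
      have h2 : k n ∈ a.support := Finsupp.mem_support_iff.2 h1
      have h3 : k n ≤ a.support.sup id := Finset.le_sup (f := id) h2
      have h4 := hk n
      omega
    exact Set.infinite_univ this
  -- A compact
  have hAcpt : IsCompact A := hK.of_isClosed_subset (hBclosed A le_rfl)
    (by rintro _ ⟨j, rfl⟩; exact hxK j)
  -- finite subcover by singletons
  obtain ⟨t, hts, htfin, htcov⟩ := hAcpt.elim_finite_subcover_image
    (b := A) (c := fun a => (A \ {a})ᶜ)
    (fun a _ => (hBclosed _ diff_subset).isOpen_compl)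
    (by intro z hz; simp only [Set.mem_iUnion]; exact ⟨z, hz, by simp⟩)
  refine hAinf (htfin.subset ?_)
  intro z hz
  obtain ⟨a, ha, hza⟩ := Set.mem_iUnion₂.1 (htcov hz)
  have : z = a := by
    by_contra h
    exact hza ⟨hz, h⟩
  exact this ▸ ha

end Aux


/-- Let `V₁ ⊆ V₂ ⊆ ⋯` be a nested exhausting sequence of
finite-dimensional subspaces of `ℝ^∞`. Then `L(ℝ^∞, ℝ^∞)` is the inverse limit of the
tower of restriction maps `⋯ → L(V₂, ℝ^∞) → L(V₁, ℝ^∞)`: the canonical map to the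
inverse limit (the subspace of the product of the `L(Vₙ, ℝ^∞)` consisting of the
compatible families) is a homeomorphism. -/
theorem LMon_inverse_limit (V : ℕ → Submodule ℝ Rinf)
    (hfd : ∀ n, FiniteDimensional ℝ (V n)) (hmono : ∀ n, V n ≤ V (n + 1))
    (hexh : ∀ x : Rinf, ∃ n, x ∈ V n) :
    IsHomeomorph (fun f : LMon =>
      (⟨fun n => resFull (V n) f,
        fun n => Subtype.ext (ContinuousMap.ext fun a => rfl)⟩ :
        {x : ∀ n, LIEsub (V n) // ∀ n, resSub (hmono n) (x (n + 1)) = x n})) := by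
  classical
  have Vmono : Monotone V := monotone_nat_of_le_succ hmono
  set Lim := {x : ∀ n, LIEsub (V n) // ∀ n, resSub (hmono n) (x (n + 1)) = x n} with hLim
  have compat : ∀ (y : Lim) {n m : ℕ} (h : n ≤ m) (a : Rinf) (ha : a ∈ V n),
      (y.1 n).1 ⟨a, ha⟩ = (y.1 m).1 ⟨a, Vmono h ha⟩ := by
    intro y n m h a ha
    induction m, h using Nat.le_induction with
    | base => rfl
    | succ m hm ih =>
      rw [ih]
      have h1 := y.2 m
      have h2 : (y.1 m).1 ⟨a, Vmono hm ha⟩ = (y.1 (m + 1)).1 ⟨a, hmono m (Vmono hm ha)⟩ := by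
        rw [← h1]; rfl
      exact h2
  let F : LMon → Lim := fun f =>
    ⟨fun n => resFull (V n) f, fun n => Subtype.ext (ContinuousMap.ext fun a => rfl)⟩
  let idx : Rinf → ℕ := fun a => Classical.choose (hexh a)
  have hidx : ∀ a, a ∈ V (idx a) := fun a => Classical.choose_spec (hexh a)
  let g : Lim → Rinf → Rinf := fun y a => (y.1 (idx a)).1 ⟨a, hidx a⟩
  have gspec : ∀ (y : Lim) (n : ℕ) (a : Rinf) (ha : a ∈ V n), g y a = (y.1 n).1 ⟨a, ha⟩ := by
    intro y n a ha
    rcases le_total (idx a) n with h | h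
    · exact compat y h a (hidx a)
    · exact (compat y h a ha).symm
  have gcont : ∀ y, Continuous (g y) := by
    intro y
    refine continuous_from_Rinf fun n => ?_
    obtain ⟨M, hM⟩ := stage_absorbs V hmono hexh n
    have hmem : ∀ v, inclR n v ∈ V M := fun v => hM _ (fun k hk => inclR_eq_zero_of_ge n v hk)
    have heq : (g y) ∘ inclR n = (y.1 M).1 ∘ (fun v => (⟨inclR n v, hmem v⟩ : V M)) := by
      funext v
      exact gspec y M (inclR n v) (hmem v)
    rw [heq]
    exact (y.1 M).1.continuous.comp ((continuous_inclR n).subtype_mk _)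
  have gadd : ∀ y a b, g y (a + b) = g y a + g y b := by
    intro y a b
    obtain ⟨n, hn⟩ := hexh a
    obtain ⟨m, hm⟩ := hexh b
    have ha : a ∈ V (max n m) := Vmono (le_max_left n m) hn
    have hb : b ∈ V (max n m) := Vmono (le_max_right n m) hm
    rw [gspec y _ a ha, gspec y _ b hb, gspec y _ (a + b) (Submodule.add_mem _ ha hb)]
    exact (y.1 (max n m)).2.1 ⟨a, ha⟩ ⟨b, hb⟩
  have gsmul : ∀ y (c : ℝ) a, g y (c • a) = c • g y a := by
    intro y c a
    obtain ⟨n, hn⟩ := hexh a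
    rw [gspec y n a hn, gspec y n (c • a) (Submodule.smul_mem _ c hn)]
    exact (y.1 n).2.2.1 c ⟨a, hn⟩
  have grin : ∀ y a b, rinner (g y a) (g y b) = rinner a b := by
    intro y a b
    obtain ⟨n, hn⟩ := hexh a
    obtain ⟨m, hm⟩ := hexh b
    have ha : a ∈ V (max n m) := Vmono (le_max_left n m) hn
    have hb : b ∈ V (max n m) := Vmono (le_max_right n m) hm
    rw [gspec y _ a ha, gspec y _ b hb]
    exact (y.1 (max n m)).2.2.2 ⟨a, ha⟩ ⟨b, hb⟩
  let G : Lim → LMon := fun y => ⟨⟨g y, gcont y⟩, gadd y, gsmul y, grin y⟩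
  have hGF : Function.LeftInverse G F := by
    intro f
    exact Subtype.ext (ContinuousMap.ext fun a => rfl)
  have hFG : Function.RightInverse G F := by
    intro y
    refine Subtype.ext (funext fun n => Subtype.ext (ContinuousMap.ext fun a => ?_))
    show g y a.1 = (y.1 n).1 a
    rw [gspec y n a.1 a.2]
  have hFc : Continuous F := by
    refine Continuous.subtype_mk (continuous_pi fun n => ?_) _
    exact Continuous.subtype_mk
      ((ContinuousMap.continuous_precomp _).comp continuous_subtype_val) _
  have hGc : Continuous G := by
    refine Continuous.subtype_mk ?_ _
    rw [ContinuousMap.continuous_compactOpen]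
    intro K hK U hU
    obtain ⟨n, hn⟩ := compact_subset_bounded hK
    obtain ⟨M, hM⟩ := stage_absorbs V hmono hexh n
    have hKV : ∀ x ∈ K, x ∈ V M := fun x hx => hM x (hn x hx)
    let j : K → V M := fun x => ⟨x.1, hKV x.1 x.2⟩
    have hjc : Continuous j := continuous_subtype_val.subtype_mk _
    have hK' : IsCompact (Set.range j) := by
      have h1 : IsCompact (Set.univ : Set K) := isCompact_iff_isCompact_univ.1 hK
      simpa [Set.image_univ] using h1.image hjc
    have hset : {y : Lim | Set.MapsTo (g y) K U} =
        (fun y : Lim => ((y.1 M).1 : C(V M, Rinf))) ⁻¹' {h | Set.MapsTo h (Set.range j) U} := by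
      ext y
      simp only [Set.mem_setOf_eq, Set.mem_preimage]
      constructor
      · rintro hmap _ ⟨x, rfl⟩
        have h1 := hmap x.2
        rwa [gspec y M x.1 (hKV x.1 x.2)] at h1
      · intro hmap x hx
        have h1 := hmap (Set.mem_range_self (⟨x, hx⟩ : K))
        rw [gspec y M x (hKV x hx)]
        exact h1
    show IsOpen {y : Lim | Set.MapsTo (g y) K U}
    rw [hset]
    exact (ContinuousMap.isOpen_setOf_mapsTo hK' hU).preimage
      (continuous_subtype_val.comp ((continuous_apply M).comp continuous_subtype_val))
  exact (Homeomorph.mk ⟨F, G, hGF, hFG⟩ hFc hGc).isHomeomorph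

end
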